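/- arXiv:2501.16956 — 3 statements merged into one kernel-verified Lean document; each statement's English description precedes it below -/
import Mathlib

section
/- Let n be a positive integer and δ ∈ (0,1). Let X_1, …, X_n be independent random variables with X_i Gaussian of mean θ and variance σ_i², where 0 < σ_1 ≤ σ_2 ≤ … ≤ σ_n, and suppose σ_1 > (2√2/0.35)·√(n·log(2/δ)) / (Σ_{i=1}^n σ_i^{-1}). Then with probability at least 1 − δ, |med(X_1,…,X_n) − θ| ≤ (√2/0.35)·√(n·log(2/δ)) / (Σ_{i=1}^n σ_i^{-1}). -/
/-!
Count the observations above `θ + t` and below `θ - t`. If fewer than half of them fall on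
either side, the median lies within `t` of `θ`. For `t ≤ σ_i / 2` the Gaussian density is at
least `0.35 / σ_i` on `[θ, θ + t]`, so each side has probability at most `1/2 - 0.35 t / σ_i`,
and the expected count on each side is at most `n/2 - 0.35 t ∑ σ_i⁻¹`. Hoeffding's inequality
for the independent indicators bounds the probability that a count reaches `n/2` by
`exp (-2 (0.35 t ∑ σ_i⁻¹)² / n) = (δ/2)⁴ ≤ δ/2` for the stated `t`.
-/

open MeasureTheory ProbabilityTheory Real Finset

/-- The empirical median of `x 0, …, x (n-1)`: the `⌈n/2⌉`-th largest value.
Equivalently, `empMed x ≥ t` if and only if at least `n/2` of the values satisfy `x i ≥ t`. -/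
noncomputable def empMed {n : ℕ} (x : Fin n → ℝ) : ℝ :=
  sSup {t : ℝ | (n : ℝ) / 2 ≤ (Finset.univ.filter fun i => t ≤ x i).card}

open scoped NNReal

section EmpiricalMedian

variable {n : ℕ} (x : Fin n → ℝ)

lemma empMed_le_of_card_lt {a : ℝ} (h : (#{i | a ≤ x i} : ℝ) < n / 2) : empMed x ≤ a := by
  have hn : 0 < n := by
    have := (#{i | a ≤ x i}).cast_nonneg (α := ℝ)
    exact_mod_cast (show (0 : ℝ) < n by linarith)
  have hmin : (univ.image x).Nonempty := univ_nonempty_iff.2 ⟨⟨0, hn⟩⟩ |>.image x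
  refine csSup_le ⟨(univ.image x).min' hmin, ?_⟩ fun s hs => le_of_not_gt fun has => ?_
  · rw [Set.mem_ofPred_eq,
      filter_true_of_mem fun i _ => min'_le _ _ (mem_image_of_mem x (mem_univ i)),
      card_univ, Fintype.card_fin]
    linarith [n.cast_nonneg (α := ℝ)]
  · have : #{i | s ≤ x i} ≤ #{i | a ≤ x i} :=
      card_le_card (monotone_filter_right _ fun i _ hi => has.le.trans hi)
    have : (n : ℝ) / 2 ≤ #{i | a ≤ x i} := hs.trans (by exact_mod_cast this)
    linarith

lemma le_empMed_of_card_lt {b : ℝ} (h : (#{i | x i ≤ b} : ℝ) < n / 2) : b ≤ empMed x := by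
  have hbdd : BddAbove {t : ℝ | (n : ℝ) / 2 ≤ #{i | t ≤ x i}} := by
    refine ⟨∑ i, |x i|, fun s hs => ?_⟩
    have hs : (n : ℝ) / 2 ≤ #{i | s ≤ x i} := hs
    obtain ⟨i, hi⟩ : (filter (fun i => s ≤ x i) univ).Nonempty := by
      rw [← card_pos, ← Nat.cast_pos (α := ℝ)]
      linarith [(#{i | x i ≤ b}).cast_nonneg (α := ℝ)]
    exact (mem_filter.1 hi).2.trans <| (le_abs_self _).trans <|
      single_le_sum (fun j _ => abs_nonneg (x j)) (mem_univ i)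
  refine le_csSup hbdd ?_
  have hsplit := card_filter_add_card_filter_not (s := univ) (fun i => x i ≤ b)
  have hnot : #{i | ¬ x i ≤ b} ≤ #{i | b ≤ x i} :=
    card_le_card (monotone_filter_right _ fun i _ hi => (not_le.1 hi).le)
  rw [card_univ, Fintype.card_fin] at hsplit
  have : (#{i | x i ≤ b} : ℝ) + #{i | ¬ x i ≤ b} = n := by exact_mod_cast hsplit
  have : (#{i | ¬ x i ≤ b} : ℝ) ≤ #{i | b ≤ x i} := by exact_mod_cast hnot
  show (n : ℝ) / 2 ≤ #{i | b ≤ x i}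
  linarith

lemma abs_empMed_sub_le {m t : ℝ} (hup : (#{i | m + t ≤ x i} : ℝ) < n / 2)
    (hlo : (#{i | x i ≤ m - t} : ℝ) < n / 2) : |empMed x - m| ≤ t := by
  have := empMed_le_of_card_lt x hup
  have := le_empMed_of_card_lt x hlo
  rw [abs_le]
  constructor <;> linarith

end EmpiricalMedian

section GaussianTail

/-- The density of `N(0, σ²)` at `σ / 2` is `exp (-1/8) / (√(2π) σ) ≈ 0.352 / σ`: this is where
the constant `0.35` comes from. -/
lemma mul_sqrt_two_pi_mul_exp_le_one : (0.35 : ℝ) * √(2 * π) * exp (1 / 8) ≤ 1 := by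
  have hsqrt : √(2 * π) ≤ 2.5067 :=
    sqrt_le_iff.2 ⟨by norm_num, by nlinarith [pi_lt_d6]⟩
  have hexp : exp (1 / 8) ≤ 1.13325 := by
    have := exp_bound' (x := 1 / 8) (by norm_num) (by norm_num) (n := 3) (by norm_num)
    norm_num [sum_range_succ, Nat.factorial] at this
    linarith
  have := sqrt_nonneg (2 * π)
  nlinarith [exp_pos (1 / 8 : ℝ)]

lemma le_gaussianPDFReal {m σ x : ℝ} (hσ : 0 < σ) (hx : |x - m| ≤ σ / 2) :
    0.35 / σ ≤ gaussianPDFReal m (σ ^ 2).toNNReal x := by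
  have hconst : 0.35 * √(2 * π) ≤ exp (-(1 / 8)) := by
    calc 0.35 * √(2 * π) = 0.35 * √(2 * π) * exp (1 / 8) * exp (-(1 / 8)) := by
          rw [mul_assoc _ (exp _), ← exp_add]; norm_num
      _ ≤ exp (-(1 / 8)) := by
          nlinarith [mul_sqrt_two_pi_mul_exp_le_one, exp_pos (-(1 / 8))]
  have hexp : exp (-(1 / 8)) ≤ exp (-(x - m) ^ 2 / (2 * σ ^ 2)) := by
    rw [exp_le_exp, neg_div, neg_le_neg_iff, div_le_iff₀ (by positivity)]
    nlinarith [sq_abs (x - m), abs_nonneg (x - m)]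
  rw [gaussianPDFReal, Real.coe_toNNReal _ (sq_nonneg σ), sqrt_mul (by positivity),
    sqrt_sq hσ.le, ← div_eq_inv_mul, div_le_div_iff₀ hσ (by positivity)]
  nlinarith

lemma gaussianReal_real_Ici_self (m : ℝ) {v : ℝ≥0} (hv : v ≠ 0) :
    (gaussianReal m v).real (Set.Ici m) = 1 / 2 := by
  have := nullSingletonClass_gaussianReal (μ := m) hv
  have hreflect : (gaussianReal m v).real (Set.Iic m) = (gaussianReal m v).real (Set.Ici m) := by
    have hmap : (gaussianReal m v).map (2 * m - ·) = gaussianReal m v := by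
      rw [gaussianReal_map_const_sub]; ring_nf
    calc (gaussianReal m v).real (Set.Iic m)
        = ((gaussianReal m v).map (2 * m - ·)).real (Set.Iic m) := by rw [hmap]
      _ = (gaussianReal m v).real (Set.Ici m) := by
        rw [map_measureReal_apply (by fun_prop) measurableSet_Iic]
        congr 1 with x
        simp only [Set.mem_preimage, Set.mem_Iic, Set.mem_Ici]
        constructor <;> intro <;> linarith
  have htotal := measureReal_add_measureReal_compl (μ := gaussianReal m v)
    (measurableSet_Iic (a := m))
  rw [Set.compl_Iic, measureReal_congr Ioi_ae_eq_Ici, probReal_univ] at htotal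
  linarith

lemma gaussianReal_real_Ici_add_le {m σ t : ℝ} (hσ : 0 < σ) (ht : 0 ≤ t) (htσ : t ≤ σ / 2) :
    (gaussianReal m (σ ^ 2).toNNReal).real (Set.Ici (m + t)) ≤ 1 / 2 - 0.35 * t / σ := by
  have hv : (σ ^ 2).toNNReal ≠ 0 := by simpa using hσ.ne'
  have hsplit := measureReal_union (μ := gaussianReal m (σ ^ 2).toNNReal)
    ((Set.Iio_disjoint_Ici le_rfl).mono_left Set.Ico_subset_Iio_self)
    (measurableSet_Ici (a := m + t))
  rw [Set.Ico_union_Ici_eq_Ici (le_add_of_nonneg_right ht),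
    gaussianReal_real_Ici_self m hv] at hsplit
  have hmass : 0.35 * t / σ ≤ (gaussianReal m (σ ^ 2).toNNReal).real (Set.Ico m (m + t)) := by
    rw [measureReal_def, gaussianReal_apply_eq_integral _ hv, ENNReal.toReal_ofReal
      (setIntegral_nonneg measurableSet_Ico fun x _ => gaussianPDFReal_nonneg _ _ _)]
    calc 0.35 * t / σ = ∫ _ in Set.Ico m (m + t), 0.35 / σ := by
          rw [setIntegral_const, volume_real_Ico_of_le (by linarith), smul_eq_mul]; ring
      _ ≤ _ := setIntegral_mono_on (integrableOn_const (by simp) (by simp))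
          (integrable_gaussianPDFReal _ _).integrableOn measurableSet_Ico fun x hx =>
            le_gaussianPDFReal hσ (by rw [abs_le]; constructor <;> linarith [hx.1, hx.2])
  linarith

namespace ProbabilityTheory.HasLaw

variable {Ω : Type*} [MeasurableSpace Ω] {P : Measure Ω} {X : Ω → ℝ} {m σ t : ℝ}

lemma measureReal_add_le_le (hX : HasLaw X (gaussianReal m (σ ^ 2).toNNReal) P)
    (hσ : 0 < σ) (ht : 0 ≤ t) (htσ : t ≤ σ / 2) :
    P.real {ω | m + t ≤ X ω} ≤ 1 / 2 - 0.35 * t / σ :=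
  (hX.measureReal_eq measurableSet_Ici).trans_le (gaussianReal_real_Ici_add_le hσ ht htσ)

lemma measureReal_le_sub_le (hX : HasLaw X (gaussianReal m (σ ^ 2).toNNReal) P)
    (hσ : 0 < σ) (ht : 0 ≤ t) (htσ : t ≤ σ / 2) :
    P.real {ω | X ω ≤ m - t} ≤ 1 / 2 - 0.35 * t / σ := by
  have hreflect := gaussianReal_const_sub hX (2 * m)
  rw [show 2 * m - m = m by ring] at hreflect
  convert hreflect.measureReal_add_le_le hσ ht htσ using 3
  funext ω
  exact propext ⟨fun _ => by linarith, fun _ => by linarith⟩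

end ProbabilityTheory.HasLaw

end GaussianTail

lemma measureReal_le_card_filter_le {Ω ι β : Type*} [MeasurableSpace Ω] [MeasurableSpace β]
    [Fintype ι] {P : Measure Ω} [IsProbabilityMeasure P] {X : ι → Ω → β}
    (hX : ∀ i, Measurable (X i)) (hindep : iIndepFun X P) {p : β → Prop} [DecidablePred p]
    (hp : MeasurableSet {x | p x}) {s ε : ℝ} (hε : 0 ≤ ε)
    (hs : ∑ i, P.real {ω | p (X i ω)} + ε ≤ s) :
    P.real {ω | s ≤ #{i | p (X i ω)}} ≤ exp (-2 * ε ^ 2 / Fintype.card ι) := by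
  set f : β → ℝ := fun x => if p x then 1 else 0
  have hf : Measurable f := measurable_const.ite hp measurable_const
  set c : ι → ℝ := fun i => P.real {ω | p (X i ω)}
  set Y : ι → Ω → ℝ := fun i => (fun x => f x - c i) ∘ X i
  have hindepY : iIndepFun Y P := hindep.comp _ fun i => hf.sub_const _
  have hsubG : ∀ i ∈ (univ : Finset ι), HasSubgaussianMGF (Y i) (1 / 4) P := by
    intro i _
    have hmean : P[f ∘ X i] = c i := by
      rw [show c i = P.real (X i ⁻¹' {x | p x}) from rfl, ← integral_indicator_one (hX i hp)]
      congr 1 with ω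
      by_cases h : p (X i ω) <;> simp [f, h]
    have hbound : ∀ᵐ ω ∂P, (f ∘ X i) ω ∈ Set.Icc 0 1 := ae_of_all _ fun ω => by
      by_cases h : p (X i ω) <;> simp [f, h]
    convert hasSubgaussianMGF_of_mem_Icc (hf.comp (hX i)).aemeasurable hbound using 1
    · rw [hmean]; rfl
    · norm_num
  calc P.real {ω | s ≤ #{i | p (X i ω)}}
      ≤ P.real {ω | ε ≤ ∑ i, Y i ω} := by
        refine measureReal_mono fun ω hω => ?_
        have hω : s ≤ #{i | p (X i ω)} := hω
        rw [natCast_card_filter] at hω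
        simp only [Set.mem_ofPred_eq, Y, Function.comp_apply, sum_sub_distrib]
        linarith
    _ ≤ exp (-ε ^ 2 / (2 * ∑ _i : ι, (1 / 4 : ℝ≥0))) :=
        HasSubgaussianMGF.measure_sum_ge_le_of_iIndepFun hindepY hsubG hε
    _ = exp (-2 * ε ^ 2 / Fintype.card ι) := by
        congr 1
        push_cast
        rw [sum_const, card_univ, nsmul_eq_mul]
        ring

lemma one_sub_measureReal_sub_le {Ω : Type*} [MeasurableSpace Ω] {P : Measure Ω}
    [IsProbabilityMeasure P] {A B G : Set Ω} (h : Aᶜ ∩ Bᶜ ⊆ G) :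
    1 - P.real A - P.real B ≤ P.real G := by
  have hcover : Set.univ ⊆ G ∪ A ∪ B := fun ω _ => by
    by_contra hω
    simp only [Set.mem_union, not_or] at hω
    exact hω.1.1 (h ⟨hω.1.2, hω.2⟩)
  have : P.real Set.univ ≤ P.real G + P.real A + P.real B :=
    (measureReal_mono hcover).trans <|
      (measureReal_union_le _ _).trans (by gcongr; exact measureReal_union_le _ _)
  rw [probReal_univ] at this
  linarith

lemma one_sub_two_mul_exp_le_measureReal_abs_empMed_sub_le {Ω : Type*} [MeasurableSpace Ω]
    {μ : Measure Ω} [IsProbabilityMeasure μ] {n : ℕ} {θ t : ℝ} {σ : Fin n → ℝ}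
    {X : Fin n → Ω → ℝ} (hσ : ∀ i, 0 < σ i) (ht : 0 ≤ t) (htσ : ∀ i, t ≤ σ i / 2)
    (hmeas : ∀ i, Measurable (X i)) (hindep : iIndepFun X μ)
    (hX : ∀ i, HasLaw (X i) (gaussianReal θ (σ i ^ 2).toNNReal) μ) :
    1 - 2 * exp (-2 * (0.35 * t * ∑ i, (σ i)⁻¹) ^ 2 / n) ≤
      μ.real {ω | |empMed (fun i => X i ω) - θ| ≤ t} := by
  have hsum (q : Fin n → ℝ) (hq : ∀ i, q i ≤ 1 / 2 - 0.35 * t / σ i) :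
      ∑ i, q i + 0.35 * t * ∑ i, (σ i)⁻¹ ≤ n / 2 := by
    have : ∑ i, (1 / 2 - 0.35 * t / σ i) = n / 2 - 0.35 * t * ∑ i, (σ i)⁻¹ := by
      simp only [sum_sub_distrib, sum_const, card_univ, Fintype.card_fin, nsmul_eq_mul, mul_sum,
        div_eq_mul_inv]
      ring
    linarith [sum_le_sum fun i (_ : i ∈ univ) => hq i]
  have hε : 0 ≤ 0.35 * t * ∑ i, (σ i)⁻¹ :=
    mul_nonneg (by positivity) (sum_nonneg fun i _ => (inv_pos.2 (hσ i)).le)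
  have hup := measureReal_le_card_filter_le hmeas hindep (p := (θ + t ≤ ·)) measurableSet_Ici hε
    (hsum _ fun i => (hX i).measureReal_add_le_le (hσ i) ht (htσ i))
  have hlo := measureReal_le_card_filter_le hmeas hindep (p := (· ≤ θ - t)) measurableSet_Iic hε
    (hsum _ fun i => (hX i).measureReal_le_sub_le (hσ i) ht (htσ i))
  rw [Fintype.card_fin] at hup hlo
  have hgood := one_sub_measureReal_sub_le (P := μ)
    (A := {ω | (n : ℝ) / 2 ≤ #{i | θ + t ≤ X i ω}}) (B := {ω | (n : ℝ) / 2 ≤ #{i | X i ω ≤ θ - t}})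
    (G := {ω | |empMed (fun i => X i ω) - θ| ≤ t})
    fun ω ⟨hω₁, hω₂⟩ => abs_empMed_sub_le _ (not_le.1 hω₁) (not_le.1 hω₂)
  linarith

/-- **Proposition 1 (Xia's bound).**
If `X_1, …, X_n` are independent with `X_i ~ N(θ, σ_i²)`, `0 < σ_1 ≤ … ≤ σ_n`,
`δ ∈ (0,1)` and `σ_1 > (2√2/0.35) √(n log(2/δ)) / ∑_{i=1}^n σ_i⁻¹`, then with
probability at least `1 - δ`,
`|med(X_1,…,X_n) - θ| ≤ (√2/0.35) √(n log(2/δ)) / ∑_{i=1}^n σ_i⁻¹`. -/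
theorem xia_empirical_median_bound
    {Ω : Type*} [MeasurableSpace Ω] (μ : Measure Ω) [IsProbabilityMeasure μ]
    (n : ℕ) (hn : 0 < n)
    (δ : ℝ) (hδ0 : 0 < δ) (hδ1 : δ < 1)
    (θ : ℝ) (σ : Fin n → ℝ) (hσpos : ∀ i, 0 < σ i) (hσmono : Monotone σ)
    (hσ1 : 2 * Real.sqrt 2 / 0.35 * Real.sqrt (n * Real.log (2 / δ)) / ∑ i, (σ i)⁻¹
      < σ ⟨0, hn⟩)
    (X : Fin n → Ω → ℝ) (hmeas : ∀ i, Measurable (X i))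
    (hindep : iIndepFun X μ)
    (hgauss : ∀ i, Measure.map (X i) μ = gaussianReal θ (Real.toNNReal ((σ i) ^ 2))) :
    1 - δ ≤ (μ {ω |
      |empMed (fun i => X i ω) - θ| ≤
        Real.sqrt 2 / 0.35 * Real.sqrt (n * Real.log (2 / δ)) / ∑ i, (σ i)⁻¹}).toReal := by
  set L := log (2 / δ)
  set S := ∑ i, (σ i)⁻¹
  set t := √2 / 0.35 * √(n * L) / S
  have hL : 0 < L := log_pos (by rw [lt_div_iff₀ hδ0]; linarith)
  have hS : 0 < S := sum_pos (fun i _ => inv_pos.2 (hσpos i)) ⟨⟨0, hn⟩, mem_univ _⟩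
  have htσ (i : Fin n) : t ≤ σ i / 2 := by
    have : 2 * t < σ ⟨0, hn⟩ := by convert hσ1 using 1; ring
    linarith [hσmono (Fin.mk_le_mk.2 (Nat.zero_le i) : (⟨0, hn⟩ : Fin n) ≤ i)]
  have hexp : exp (-2 * (0.35 * t * S) ^ 2 / n) ≤ δ / 2 := by
    have : 0.35 * t * S = √2 * √(n * L) := by simp only [t]; field_simp
    rw [this, mul_pow, sq_sqrt zero_le_two, sq_sqrt (by positivity)]
    calc exp (-2 * (2 * (n * L)) / n) ≤ exp (-L) := by
          gcongr; field_simp; nlinarith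
      _ = δ / 2 := by rw [← log_inv, inv_div, exp_log (by positivity)]
  have := one_sub_two_mul_exp_le_measureReal_abs_empMed_sub_le hσpos (by positivity) htσ hmeas
    hindep fun i => ⟨(hmeas i).aemeasurable, hgauss i⟩
  rw [← measureReal_def]
  linarith
end

section
/- Let n be a positive integer, let Δ > 0, and let p_1, …, p_n be such that p_i ∈ [1/4, 3/4] and p_i + Δ ∈ [1/4, 3/4] for every i. Let P be the law of (V_1,…,V_n) where the V_i are independent Bernoulli of parameter p_i, and let Q be the law of (W_1,…,W_n) where the W_i are independent Bernoulli of parameter p_i + Δ. Then the total variation distance satisfies d_TV(P, Q) ≤ 1 − (1/2)·exp(−(16/3)·n·Δ²). -/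
open MeasureTheory ProbabilityTheory Real

/-- The Bernoulli distribution of parameter `p` as a measure on `ℝ`: it puts mass `p` at `1`
and mass `1 - p` at `0`. -/
noncomputable def bernoulliMeasure (p : ℝ) : Measure ℝ :=
  ENNReal.ofReal p • Measure.dirac (1 : ℝ) + ENNReal.ofReal (1 - p) • Measure.dirac (0 : ℝ)

/-! Le Cam's inequality bounds `|P(A) - Q(A)|` by `1 - BC² / 2`, where `BC = ∑ √(q r)` is the
Bhattacharyya coefficient of the two laws: the left side is at most `1 - ∑ min(q, r)`, and
Cauchy–Schwarz gives `BC² ≤ ∑ min(q, r) · ∑ max(q, r) ≤ 2 ∑ min(q, r)`. The coefficient is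
multiplicative over product laws, and for Bernoulli laws with parameters `p, q ∈ [1/4, 3/4]` it is
at least `1 - (4/3)(p - q)² ≥ exp(-(8/3)(p - q)²)`. Hence `BC² ≥ exp(-(16/3) n Δ²)` for the two
product laws. -/

open Finset
open scoped ENNReal

namespace MeasureTheory.Measure

theorem sum_smul_dirac_apply {α β : Type*} [Fintype α] [MeasurableSpace β] (c : α → ℝ≥0∞)
    (y : α → β) {A : Set β} [DecidablePred (· ∈ A)] (hA : MeasurableSet A) :
    (∑ a, c a • dirac (y a)) A = ∑ a with y a ∈ A, c a := by
  simp [finsetSum_apply, dirac_apply' _ hA, Set.indicator_apply, sum_filter]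

theorem pi_eq_sum_smul_dirac {ι α β : Type*} [Fintype ι] [DecidableEq ι] [Fintype α]
    [MeasurableSpace β] {μ : ι → Measure β} [∀ i, SigmaFinite (μ i)] (w : ι → α → ℝ≥0∞)
    (x : α → β) (hμ : ∀ i, μ i = ∑ a, w i a • dirac (x a)) :
    Measure.pi μ = ∑ f : ι → α, (∏ i, w i (f i)) • dirac (fun i => x (f i)) := by
  classical
  refine pi_eq fun s hs => ?_
  rw [sum_smul_dirac_apply _ _ (MeasurableSet.univ_pi hs)]
  simp_rw [hμ, sum_smul_dirac_apply _ _ (hs _), sum_filter, Fintype.prod_sum, Set.mem_univ_pi,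
    prod_ite_zero, mem_univ, true_imp_iff]

end MeasureTheory.Measure

noncomputable def bhattacharyya {α : Type*} [Fintype α] (q r : α → ℝ) : ℝ := ∑ a, √(q a * r a)

section LeCam

variable {α : Type*} [Fintype α] {q r : α → ℝ}

lemma sum_sub_sum_le_one_sub_sum_min (hq : ∑ a, q a = 1) (s : Finset α) :
    ∑ a ∈ s, q a - ∑ a ∈ s, r a ≤ 1 - ∑ a, min (q a) (r a) :=
  calc ∑ a ∈ s, q a - ∑ a ∈ s, r a
      ≤ ∑ a ∈ s, (q a - min (q a) (r a)) := by
        rw [← sum_sub_distrib]; gcongr; exact min_le_right _ _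
    _ ≤ ∑ a, (q a - min (q a) (r a)) :=
        sum_le_sum_of_subset_of_nonneg (subset_univ s) fun a _ _ => sub_nonneg.2 (min_le_left _ _)
    _ = 1 - ∑ a, min (q a) (r a) := by rw [sum_sub_distrib, hq]

lemma abs_sum_sub_sum_le_one_sub_sum_min (hq : ∑ a, q a = 1) (hr : ∑ a, r a = 1)
    (s : Finset α) : |∑ a ∈ s, q a - ∑ a ∈ s, r a| ≤ 1 - ∑ a, min (q a) (r a) := by
  refine abs_sub_le_iff.2 ⟨sum_sub_sum_le_one_sub_sum_min hq s, ?_⟩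
  simpa only [min_comm] using sum_sub_sum_le_one_sub_sum_min (r := q) hr s

lemma sq_bhattacharyya_le_two_mul_sum_min (hq0 : ∀ a, 0 ≤ q a) (hr0 : ∀ a, 0 ≤ r a)
    (hqr : ∑ a, q a + ∑ a, r a = 2) :
    bhattacharyya q r ^ 2 ≤ 2 * ∑ a, min (q a) (r a) := by
  have hmin : ∀ a, 0 ≤ min (q a) (r a) := fun a => le_min (hq0 a) (hr0 a)
  have hsum_max : ∑ a, max (q a) (r a) = 2 - ∑ a, min (q a) (r a) := by
    rw [eq_sub_iff_add_eq, ← sum_add_distrib, ← hqr, ← sum_add_distrib]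
    exact sum_congr rfl fun a _ => by rw [add_comm, min_add_max]
  -- `√(q r) = √(min q r) √(max q r)`, then Cauchy–Schwarz.
  have hcs : bhattacharyya q r ^ 2 ≤ (∑ a, min (q a) (r a)) * ∑ a, max (q a) (r a) := by
    have := sum_mul_sq_le_sq_mul_sq univ (fun a => √(min (q a) (r a))) fun a => √(max (q a) (r a))
    simpa only [bhattacharyya, ← sqrt_mul (hmin _), min_mul_max, sq_sqrt (hmin _),
      sq_sqrt ((hmin _).trans min_le_max)] using this
  have := sum_nonneg fun a (_ : a ∈ univ) => hmin a
  nlinarith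

theorem abs_sum_sub_sum_le_one_sub_sq_bhattacharyya (hq0 : ∀ a, 0 ≤ q a) (hr0 : ∀ a, 0 ≤ r a)
    (hq : ∑ a, q a = 1) (hr : ∑ a, r a = 1) (s : Finset α) :
    |∑ a ∈ s, q a - ∑ a ∈ s, r a| ≤ 1 - bhattacharyya q r ^ 2 / 2 := by
  have := sq_bhattacharyya_le_two_mul_sum_min hq0 hr0 (by rw [hq, hr]; norm_num)
  linarith [abs_sum_sub_sum_le_one_sub_sum_min hq hr s]

end LeCam

lemma bhattacharyya_pi {ι α : Type*} [Fintype ι] [DecidableEq ι] [Fintype α] {q r : ι → α → ℝ}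
    (hq : ∀ i a, 0 ≤ q i a) (hr : ∀ i a, 0 ≤ r i a) :
    bhattacharyya (fun f : ι → α => ∏ i, q i (f i)) (fun f => ∏ i, r i (f i))
      = ∏ i, bhattacharyya (q i) (r i) := by
  simp only [bhattacharyya, Fintype.prod_sum]
  exact sum_congr rfl fun f _ => by
    rw [← prod_mul_distrib, sqrt_prod _ fun i _ => mul_nonneg (hq i _) (hr i _)]

lemma sub_sq_div_le_sqrt_sq_sub_sq {m : ℝ} (hm : 0 < m) (d : ℝ) :
    m - d ^ 2 / m ≤ √(m ^ 2 - d ^ 2) := by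
  rw [show m - d ^ 2 / m = (m ^ 2 - d ^ 2) / m by field_simp, div_le_iff₀ hm]
  rcases le_total (m ^ 2 - d ^ 2) 0 with h | h
  · nlinarith [sqrt_nonneg (m ^ 2 - d ^ 2)]
  · calc m ^ 2 - d ^ 2 = √(m ^ 2 - d ^ 2) * √(m ^ 2 - d ^ 2) := (mul_self_sqrt h).symm
      _ ≤ √(m ^ 2 - d ^ 2) * m := by
        gcongr
        exact sqrt_le_iff.2 ⟨hm.le, by nlinarith⟩

lemma exp_neg_two_mul_le_one_sub {x : ℝ} (h0 : 0 ≤ x) (h1 : x ≤ 1 / 2) :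
    exp (-(2 * x)) ≤ 1 - x := by
  rw [exp_neg, inv_le_iff_one_le_mul₀ (exp_pos _)]
  nlinarith [add_one_le_exp (2 * x)]

noncomputable def bernoulliWeight (p : ℝ) (b : Bool) : ℝ := if b then p else 1 - p

noncomputable def bernoulliPiWeight {ι : Type*} [Fintype ι] (p : ι → ℝ) (f : ι → Bool) : ℝ :=
  ∏ i, bernoulliWeight (p i) (f i)

section Bernoulli

variable {ι : Type*} [Fintype ι]

lemma bernoulliWeight_nonneg {p : ℝ} (hp : p ∈ Set.Icc 0 1) (b : Bool) :
    0 ≤ bernoulliWeight p b := by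
  cases b <;> simp [bernoulliWeight, hp.1, hp.2]

lemma bernoulliPiWeight_nonneg {p : ι → ℝ} (hp : ∀ i, p i ∈ Set.Icc 0 1) (f : ι → Bool) :
    0 ≤ bernoulliPiWeight p f :=
  prod_nonneg fun i _ => bernoulliWeight_nonneg (hp i) (f i)

variable [DecidableEq ι]

lemma sum_bernoulliPiWeight (p : ι → ℝ) : ∑ f, bernoulliPiWeight p f = 1 := by
  simp only [bernoulliPiWeight, ← Fintype.prod_sum]
  exact prod_eq_one fun i _ => by simp [bernoulliWeight]

lemma bernoulliMeasure_eq_sum_smul_dirac (p : ℝ) :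
    _root_.bernoulliMeasure p
      = ∑ b : Bool, ENNReal.ofReal (bernoulliWeight p b) • Measure.dirac (b.toNat : ℝ) := by
  simp [_root_.bernoulliMeasure, bernoulliWeight, add_comm]

instance (p : ℝ) : IsFiniteMeasure (_root_.bernoulliMeasure p) where
  measure_univ_lt_top := by simp [_root_.bernoulliMeasure]

lemma measureReal_pi_bernoulliMeasure {p : ι → ℝ} (hp : ∀ i, p i ∈ Set.Icc 0 1)
    {A : Set (ι → ℝ)} [DecidablePred (· ∈ A)] (hA : MeasurableSet A) :
    (Measure.pi fun i => _root_.bernoulliMeasure (p i)).real A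
      = ∑ f : ι → Bool with (fun i => ((f i).toNat : ℝ)) ∈ A, bernoulliPiWeight p f := by
  have hw : ∀ f : ι → Bool, ∀ i, 0 ≤ bernoulliWeight (p i) (f i) := fun f i =>
    bernoulliWeight_nonneg (hp i) (f i)
  unfold bernoulliPiWeight
  rw [measureReal_def,
    Measure.pi_eq_sum_smul_dirac _ _ fun i => bernoulliMeasure_eq_sum_smul_dirac _,
    Measure.sum_smul_dirac_apply _ _ hA]
  simp_rw [← ENNReal.ofReal_prod_of_nonneg fun i _ => hw _ i]
  rw [← ENNReal.ofReal_sum_of_nonneg fun f _ => prod_nonneg fun i _ => hw f i,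
    ENNReal.toReal_ofReal (sum_nonneg fun f _ => prod_nonneg fun i _ => hw f i)]

lemma one_sub_le_bhattacharyya_bernoulliWeight {p q : ℝ} (hp : p ∈ Set.Icc (1 / 4 : ℝ) (3 / 4))
    (hq : q ∈ Set.Icc (1 / 4 : ℝ) (3 / 4)) :
    1 - 4 / 3 * (p - q) ^ 2 ≤ bhattacharyya (bernoulliWeight p) (bernoulliWeight q) := by
  obtain ⟨hp1, hp2⟩ := hp
  obtain ⟨hq1, hq2⟩ := hq
  obtain ⟨m, hm_def⟩ : ∃ m, m = (p + q) / 2 := ⟨_, rfl⟩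
  obtain ⟨d, hd_def⟩ : ∃ d, d = (q - p) / 2 := ⟨_, rfl⟩
  have hm : 0 < m := by linarith
  have hm' : 0 < 1 - m := by linarith
  have hB : bhattacharyya (bernoulliWeight p) (bernoulliWeight q)
      = √(m ^ 2 - d ^ 2) + √((1 - m) ^ 2 - d ^ 2) := by
    simp only [bhattacharyya, Fintype.sum_bool, bernoulliWeight, if_true, Bool.false_eq_true,
      if_false, hm_def, hd_def]
    ring_nf
  -- `m (1 - m) ≥ 3/16` on `[1/4, 3/4]`
  have hd : d ^ 2 / m + d ^ 2 / (1 - m) ≤ 16 / 3 * d ^ 2 := by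
    rw [div_add_div _ _ hm.ne' hm'.ne', div_le_iff₀ (mul_pos hm hm')]
    nlinarith [mul_nonneg (sq_nonneg d) (mul_nonneg (by linarith : (0 : ℝ) ≤ m - 1 / 4)
      (by linarith : (0 : ℝ) ≤ 3 / 4 - m))]
  rw [hB, show (p - q) ^ 2 = 4 * d ^ 2 by rw [hd_def]; ring]
  linarith [sub_sq_div_le_sqrt_sq_sub_sq hm d, sub_sq_div_le_sqrt_sq_sub_sq hm' d]

lemma exp_le_bhattacharyya_bernoulliWeight {p q : ℝ} (hp : p ∈ Set.Icc (1 / 4 : ℝ) (3 / 4))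
    (hq : q ∈ Set.Icc (1 / 4 : ℝ) (3 / 4)) :
    exp (-(8 / 3) * (p - q) ^ 2) ≤ bhattacharyya (bernoulliWeight p) (bernoulliWeight q) :=
  calc exp (-(8 / 3) * (p - q) ^ 2) = exp (-(2 * (4 / 3 * (p - q) ^ 2))) := by ring_nf
    _ ≤ 1 - 4 / 3 * (p - q) ^ 2 :=
      exp_neg_two_mul_le_one_sub (by positivity) (by nlinarith [hp.1, hp.2, hq.1, hq.2])
    _ ≤ _ := one_sub_le_bhattacharyya_bernoulliWeight hp hq

lemma exp_le_bhattacharyya_bernoulliPiWeight {p q : ι → ℝ}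
    (hp : ∀ i, p i ∈ Set.Icc (1 / 4 : ℝ) (3 / 4)) (hq : ∀ i, q i ∈ Set.Icc (1 / 4 : ℝ) (3 / 4)) :
    exp (-(8 / 3) * ∑ i, (p i - q i) ^ 2)
      ≤ bhattacharyya (bernoulliPiWeight p) (bernoulliPiWeight q) := by
  have h01 : Set.Icc (1 / 4 : ℝ) (3 / 4) ⊆ Set.Icc 0 1 :=
    Set.Icc_subset_Icc (by norm_num) (by norm_num)
  unfold bernoulliPiWeight
  rw [bhattacharyya_pi (fun i => bernoulliWeight_nonneg (h01 (hp i)))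
    (fun i => bernoulliWeight_nonneg (h01 (hq i))), mul_sum, exp_sum]
  exact prod_le_prod (fun _ _ => (exp_pos _).le) fun i _ =>
    exp_le_bhattacharyya_bernoulliWeight (hp i) (hq i)

end Bernoulli

theorem total_variation_shifted_bernoulli_products_general
    (n : ℕ) (Δ : ℝ)
    (p : Fin n → ℝ) (hp : ∀ i, p i ∈ Set.Icc (1 / 4 : ℝ) (3 / 4))
    (hpΔ : ∀ i, p i + Δ ∈ Set.Icc (1 / 4 : ℝ) (3 / 4))
    (A : Set (Fin n → ℝ)) (hA : MeasurableSet A) :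
    |((Measure.pi fun i => bernoulliMeasure (p i)) A).toReal -
        ((Measure.pi fun i => bernoulliMeasure (p i + Δ)) A).toReal|
      ≤ 1 - 1 / 2 * Real.exp (-(16 / 3) * n * Δ ^ 2) := by
  classical
  have h01 : Set.Icc (1 / 4 : ℝ) (3 / 4) ⊆ Set.Icc 0 1 :=
    Set.Icc_subset_Icc (by norm_num) (by norm_num)
  have hP : ∀ i, p i ∈ Set.Icc 0 1 := fun i => h01 (hp i)
  have hQ : ∀ i, p i + Δ ∈ Set.Icc 0 1 := fun i => h01 (hpΔ i)
  rw [← measureReal_def, ← measureReal_def, measureReal_pi_bernoulliMeasure hP hA,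
    measureReal_pi_bernoulliMeasure hQ hA]
  have hsum : ∑ i, (p i - (p i + Δ)) ^ 2 = n * Δ ^ 2 := by simp
  calc _ ≤ 1 - bhattacharyya (bernoulliPiWeight p) (bernoulliPiWeight (p · + Δ)) ^ 2 / 2 :=
        abs_sum_sub_sum_le_one_sub_sq_bhattacharyya (bernoulliPiWeight_nonneg hP)
          (bernoulliPiWeight_nonneg hQ) (sum_bernoulliPiWeight _) (sum_bernoulliPiWeight _) _
    _ ≤ 1 - exp (-(8 / 3) * ∑ i, (p i - (p i + Δ)) ^ 2) ^ 2 / 2 := by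
        gcongr
        exact exp_le_bhattacharyya_bernoulliPiWeight hp hpΔ
    _ = 1 - 1 / 2 * exp (-(16 / 3) * n * Δ ^ 2) := by
        rw [hsum, ← exp_nat_mul]
        ring_nf

/-- **Total variation bound between shifted products of Bernoulli laws.**
If `p_i ∈ [1/4, 3/4]` and `p_i + Δ ∈ [1/4, 3/4]` for all `i`, `Δ > 0`, `P` is the joint
law of `n` independent Bernoulli(`p_i`) random variables, and `Q` is the joint law of `n`
independent Bernoulli(`p_i + Δ`) random variables, then
`d_TV(P, Q) = sup_A |P(A) - Q(A)| ≤ 1 - (1/2) exp(-(16/3) n Δ²)`. -/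
theorem total_variation_shifted_bernoulli_products
    (n : ℕ) (hn : 0 < n) (Δ : ℝ) (hΔ : 0 < Δ)
    (p : Fin n → ℝ) (hp : ∀ i, p i ∈ Set.Icc (1 / 4 : ℝ) (3 / 4))
    (hpΔ : ∀ i, p i + Δ ∈ Set.Icc (1 / 4 : ℝ) (3 / 4))
    (A : Set (Fin n → ℝ)) (hA : MeasurableSet A) :
    |((Measure.pi fun i => bernoulliMeasure (p i)) A).toReal -
        ((Measure.pi fun i => bernoulliMeasure (p i + Δ)) A).toReal|
      ≤ 1 - 1 / 2 * Real.exp (-(16 / 3) * n * Δ ^ 2) :=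
  total_variation_shifted_bernoulli_products_general n Δ p hp hpΔ A hA
end

section
/- Let n ≥ 4 be an integer and let 0 < σ_1 ≤ σ_2 ≤ … ≤ σ_n. Then √n / ( Σ_{i=⌈√n⌉}^n σ_i^{-1} ) ≤ 2√2 · √( Σ_{i=1}^n σ_i² ) / n. -/
open Real Finset

/-!
Let `k = n + 1 - ⌈√n⌉` be the number of terms in the harmonic sum `S`. Cauchy–Schwarz gives
`k² ≤ S · ∑ σ_i` and `(∑ σ_i)² ≤ k · ∑ σ_i²`, hence `k³ ≤ S² · ∑ σ_i²`. Since `2⌈√n⌉ ≤ n + 2`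
we have `n ≤ 2k`, so `n³ ≤ 8 S² ∑ σ_i²`, which is the squared form of the claim.
-/

namespace Finset

variable {ι K : Type*} [Field K] [LinearOrder K] [IsStrictOrderedRing K]

theorem card_sq_le_sum_inv_mul_sum (s : Finset ι) {f : ι → K} (hf : ∀ i ∈ s, 0 < f i) :
    (#s : K) ^ 2 ≤ (∑ i ∈ s, (f i)⁻¹) * ∑ i ∈ s, f i := by
  simpa using sum_sq_le_sum_mul_sum_of_sq_le_mul s (r := fun _ => (1 : K))
    (fun i hi => (inv_pos.mpr (hf i hi)).le) (fun i hi => (hf i hi).le)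
    (fun i hi => by rw [inv_mul_cancel₀ (hf i hi).ne', one_pow])

theorem card_pow_three_le_sum_inv_sq_mul_sum_sq (s : Finset ι) {f : ι → K}
    (hf : ∀ i ∈ s, 0 < f i) :
    (#s : K) ^ 3 ≤ (∑ i ∈ s, (f i)⁻¹) ^ 2 * ∑ i ∈ s, f i ^ 2 := by
  rcases s.eq_empty_or_nonempty with rfl | hs
  · simp
  have hk : (0 : K) < #s := by exact_mod_cast hs.card_pos
  refine le_of_mul_le_mul_left ?_ hk
  calc (#s : K) * #s ^ 3 = (#s ^ 2) ^ 2 := by ring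
    _ ≤ ((∑ i ∈ s, (f i)⁻¹) * ∑ i ∈ s, f i) ^ 2 := 
      pow_le_pow_left₀ (by positivity) (card_sq_le_sum_inv_mul_sum s hf) 2
    _ = (∑ i ∈ s, (f i)⁻¹) ^ 2 * (∑ i ∈ s, f i) ^ 2 := by ring
    _ ≤ (∑ i ∈ s, (f i)⁻¹) ^ 2 * (#s * ∑ i ∈ s, f i ^ 2) := by
      gcongr; exact sq_sum_le_card_mul_sum_sq
    _ = #s * ((∑ i ∈ s, (f i)⁻¹) ^ 2 * ∑ i ∈ s, f i ^ 2) := by ring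

end Finset

theorem Nat.two_mul_ceil_sqrt_le (n : ℕ) : 2 * ⌈√(n : ℝ)⌉₊ ≤ n + 2 := by
  have hceil := Nat.ceil_lt_add_one (sqrt_nonneg (n : ℝ))
  have hamgm : 2 * √(n : ℝ) ≤ n + 1 := by
    nlinarith [sq_nonneg (√(n : ℝ) - 1), sq_sqrt (Nat.cast_nonneg (α := ℝ) n)]
  have : (2 * ⌈√(n : ℝ)⌉₊ : ℝ) < n + 3 := by linarith
  exact Nat.lt_add_one_iff.mp (by exact_mod_cast this)

theorem median_bound_le_mean_bound_general
    (n : ℕ) (σ : ℕ → ℝ)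
    (hσpos : ∀ i ∈ Finset.Icc 1 n, 0 < σ i) :
    Real.sqrt n / ∑ i ∈ Finset.Icc ⌈Real.sqrt n⌉₊ n, (σ i)⁻¹
      ≤ 2 * Real.sqrt 2 * Real.sqrt (∑ i ∈ Finset.Icc 1 n, (σ i) ^ 2) / n := by
  rcases n.eq_zero_or_pos with rfl | hn
  · simp
  have hceil := Nat.two_mul_ceil_sqrt_le n
  set m := ⌈√(n : ℝ)⌉₊
  set S := ∑ i ∈ Icc m n, (σ i)⁻¹
  set Q := ∑ i ∈ Icc 1 n, σ i ^ 2
  have hm : 1 ≤ m := Nat.one_le_iff_ne_zero.mpr (by positivity)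
  have hsub : Icc m n ⊆ Icc 1 n := Icc_subset_Icc hm le_rfl
  have hpos : ∀ i ∈ Icc m n, 0 < σ i := fun i hi => hσpos i (hsub hi)
  have hS : 0 < S := sum_pos (fun i hi => inv_pos.mpr (hpos i hi)) (nonempty_Icc.mpr (by omega))
  have hn2k : (n : ℝ) ≤ 2 * #(Icc m n) := by
    rw [Nat.card_Icc]
    exact_mod_cast (by omega : n ≤ 2 * (n + 1 - m))
  have hcube : (#(Icc m n) : ℝ) ^ 3 ≤ S ^ 2 * Q :=
    (card_pow_three_le_sum_inv_sq_mul_sum_sq _ hpos).trans <| by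
      gcongr
      exact sum_le_sum_of_subset_of_nonneg hsub fun i _ _ => sq_nonneg _
  rw [div_le_div_iff₀ hS (by exact_mod_cast hn)]
  refine (pow_le_pow_iff_left₀ (by positivity) (by positivity) two_ne_zero).mp ?_
  calc (√(n : ℝ) * n) ^ 2 = (n : ℝ) ^ 3 := by rw [mul_pow, sq_sqrt (by positivity)]; ring
    _ ≤ (2 * (#(Icc m n) : ℝ)) ^ 3 := by gcongr
    _ ≤ 8 * (S ^ 2 * Q) := by linarith
    _ = (2 * √2 * √Q * S) ^ 2 := by
      rw [mul_pow, mul_pow, mul_pow, sq_sqrt zero_le_two, sq_sqrt (sum_nonneg fun i _ => sq_nonneg _)]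
      ring

/-- **Comparison of the median bound with the mean bound.**
For `n ≥ 4` and `0 < σ_1 ≤ … ≤ σ_n` (indexed from `1` to `n`),
`√n / ∑_{i=⌈√n⌉}^n σ_i⁻¹ ≤ 2√2 · √(∑_{i=1}^n σ_i²) / n`. -/
theorem median_bound_le_mean_bound
    (n : ℕ) (hn : 4 ≤ n) (σ : ℕ → ℝ)
    (hσpos : ∀ i ∈ Finset.Icc 1 n, 0 < σ i)
    (hσmono : ∀ i j, 1 ≤ i → i ≤ j → j ≤ n → σ i ≤ σ j) :
    Real.sqrt n / ∑ i ∈ Finset.Icc ⌈Real.sqrt n⌉₊ n, (σ i)⁻¹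
      ≤ 2 * Real.sqrt 2 * Real.sqrt (∑ i ∈ Finset.Icc 1 n, (σ i) ^ 2) / n :=
  median_bound_le_mean_bound_general n σ hσpos
end
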